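/- arXiv:math/0405368 — 3 statements merged into one kernel-verified Lean document; each statement's English description precedes it below -/
import Mathlib

section
/- For every z ∈ ℂ, lim_{n→∞} ₂F₁(n+2k, −n, k+1/2; (1−cos(z/n))/2) = j_{k−1/2}(z), where j_α(z) = Γ(α+1) Σ_{m≥0} (−1)^m (z/2)^{2m} / (m! Γ(m+α+1)) is the modified Bessel function, and k > 0. -/
/-!
This is a confluence `₂F₁(n + b, -n; γ; x_n) → ₀F₁(; γ; -w)` whenever `n² x_n → w`; here
`b = 2k`, `γ = k + 1/2`, `x_n = (1 - cos (z/n))/2` and `w = z²/4`. In the `m`-th term,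
`(n + b)_m / n^m → 1` and `(-n)_m / (-n)^m → 1`, so the term tends to `(-w)^m / ((γ)_m m!)`.
For `m ≤ n` the term is bounded by `C^m / m!` with `C` independent of `n`, and it vanishes for
`m > n`, so dominated convergence for series gives the limit; `Γ(m + γ) = (γ)_m Γ(γ)` identifies
it with `j_{k-1/2}(z)`.
-/

open Filter Finset Topology Bornology

lemma ascPochhammer_eval_eq_prod_range {R : Type*} [CommSemiring R] (m : ℕ) (x : R) :
    (ascPochhammer R m).eval x = ∏ i ∈ range m, (x + i) := by
  induction m with
  | zero => simp
  | succ m ih => rw [ascPochhammer_succ_eval, ih, prod_range_succ]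

lemma norm_ascPochhammer_eval_le (x : ℂ) (m : ℕ) :
    ‖(ascPochhammer ℂ m).eval x‖ ≤ (‖x‖ + m) ^ m := by
  rw [ascPochhammer_eval_eq_prod_range, norm_prod]
  refine (prod_le_prod (fun _ _ => norm_nonneg _) fun i hi => ?_).trans_eq
    (pow_eq_prod_const ..).symm
  calc ‖x + i‖ ≤ ‖x‖ + i := by simpa using norm_add_le x i
    _ ≤ ‖x‖ + m := by gcongr; exact (mem_range.mp hi).le

lemma re_pow_le_norm_ascPochhammer_eval {a : ℂ} (ha : 0 ≤ a.re) (m : ℕ) :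
    a.re ^ m ≤ ‖(ascPochhammer ℂ m).eval a‖ := by
  rw [ascPochhammer_eval_eq_prod_range, norm_prod]
  refine (pow_eq_prod_const ..).trans_le (prod_le_prod (fun _ _ => ha) fun i _ => ?_)
  calc a.re ≤ (a + i).re := by simp
    _ ≤ ‖a + i‖ := Complex.re_le_norm _

lemma tendsto_ascPochhammer_eval_add_div_pow {𝕜 : Type*} [NormedField 𝕜] (c : 𝕜) (m : ℕ) :
    Tendsto (fun x => (ascPochhammer 𝕜 m).eval (x + c) / x ^ m) (cobounded 𝕜) (𝓝 1) := by
  have hfactor (i : ℕ) : Tendsto (fun x : 𝕜 => 1 + (c + i) * x⁻¹) (cobounded 𝕜) (𝓝 1) := by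
    simpa using (tendsto_inv₀_cobounded.const_mul (c + i)).const_add 1
  have hprod := tendsto_finsetProd (range m) fun i _ => hfactor i
  rw [prod_const_one] at hprod
  refine hprod.congr' ?_
  filter_upwards [eventually_ne_cobounded 0] with x hx
  rw [ascPochhammer_eval_eq_prod_range, pow_eq_prod_const, ← prod_div_distrib]
  refine prod_congr rfl fun i _ => ?_
  field_simp
  ring

lemma Complex.Gamma_nat_add_eq_ascPochhammer_mul {a : ℂ} (ha : 0 < a.re) (m : ℕ) :
    Complex.Gamma (m + a) = (ascPochhammer ℂ m).eval a * Complex.Gamma a := by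
  have hpole (j : ℕ) : a ≠ -j := fun h => by
    have := congrArg Complex.re h
    simp only [neg_re, natCast_re] at this
    linarith [(j.cast_nonneg : (0 : ℝ) ≤ j)]
  rw [← Complex.Gamma_add_nat_div_Gamma_eq a hpole, add_comm,
    div_mul_cancel₀ _ (Complex.Gamma_ne_zero_of_re_pos ha)]

lemma tendsto_natCast_sq_mul_one_sub_cos_div (z : ℂ) :
    Tendsto (fun n : ℕ => (n : ℂ) ^ 2 * ((1 - Complex.cos (z / n)) / 2)) atTop
      (𝓝 (z ^ 2 / 4)) := by
  rw [← tendsto_sub_nhds_zero_iff]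
  have hbound : ∀ᶠ n : ℕ in atTop,
      ‖(n : ℂ) ^ 2 * ((1 - Complex.cos (z / n)) / 2) - z ^ 2 / 4‖ ≤
        ‖z‖ ^ 4 * (5 / 192) / n ^ 2 := by
    filter_upwards [eventually_gt_atTop 0, eventually_ge_atTop ⌈‖z‖⌉₊] with n hn hzn
    have hnR : (0 : ℝ) < n := Nat.cast_pos.mpr hn
    have hnC : (n : ℂ) ≠ 0 := Nat.cast_ne_zero.mpr hn.ne'
    have hw : ‖z / n‖ ≤ 1 := by
      rw [norm_div, Complex.norm_natCast, div_le_one hnR]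
      exact (Nat.le_ceil _).trans (by exact_mod_cast hzn)
    have hexpand : (n : ℂ) ^ 2 * ((1 - Complex.cos (z / n)) / 2) - z ^ 2 / 4
        = -((n : ℂ) ^ 2 / 2) * (Complex.cos (z / n) - (1 - (z / n) ^ 2 / 2)) := by
      field_simp
      ring
    rw [hexpand, norm_mul]
    calc ‖-((n : ℂ) ^ 2 / 2)‖ * ‖Complex.cos (z / n) - (1 - (z / n) ^ 2 / 2)‖
        ≤ n ^ 2 / 2 * (‖z / n‖ ^ 4 * (5 / 96)) := by
          gcongr
          · simp
          · exact Complex.cos_bound hw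
      _ = ‖z‖ ^ 4 * (5 / 192) / n ^ 2 := by
          rw [norm_div, Complex.norm_natCast]
          field_simp
          ring
  refine squeeze_zero_norm' hbound ?_
  exact tendsto_const_nhds.div_atTop
    ((tendsto_pow_atTop two_ne_zero).comp tendsto_natCast_atTop_atTop)

/-- The `m`-th term of `₂F₁(α, β; γ; x)`. -/
noncomputable def hypergeometricTerm (α β γ x : ℂ) (m : ℕ) : ℂ :=
  (ascPochhammer ℂ m).eval α * (ascPochhammer ℂ m).eval β /
    ((ascPochhammer ℂ m).eval γ * (m.factorial : ℂ)) * x ^ m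

lemma hypergeometricTerm_neg_natCast_of_lt (α γ x : ℂ) {n m : ℕ} (h : n < m) :
    hypergeometricTerm α (-n) γ x m = 0 := by
  simp [hypergeometricTerm, ascPochhammer_eval_neg_coe_nat_of_lt h]

lemma tendsto_hypergeometricTerm (b γ w : ℂ) {x : ℕ → ℂ}
    (hx : Tendsto (fun n : ℕ => (n : ℂ) ^ 2 * x n) atTop (𝓝 w)) (m : ℕ) :
    Tendsto (fun n : ℕ => hypergeometricTerm (n + b) (-n) γ (x n) m) atTop
      (𝓝 ((-w) ^ m / ((ascPochhammer ℂ m).eval γ * (m.factorial : ℂ)))) := by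
  have hn : Tendsto (fun n : ℕ => (n : ℂ)) atTop (cobounded ℂ) := tendsto_natCast_atTop_cobounded
  have hup := (tendsto_ascPochhammer_eval_add_div_pow b m).comp hn
  have hdown := (tendsto_ascPochhammer_eval_add_div_pow 0 m).comp (tendsto_neg_cobounded.comp hn)
  have hlim := ((hup.mul hdown).mul ((hx.const_mul (-1)).pow m)).div_const
    ((ascPochhammer ℂ m).eval γ * (m.factorial : ℂ))
  simp only [one_mul, neg_one_mul] at hlim
  refine hlim.congr' ?_
  filter_upwards [eventually_ne_atTop 0] with n hn0
  have hneg : (-(n : ℂ)) ^ m ≠ 0 := pow_ne_zero _ (neg_ne_zero.mpr (Nat.cast_ne_zero.mpr hn0))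
  have hsplit : (-((n : ℂ) ^ 2 * x n)) ^ m = (-(n : ℂ)) ^ m * (n : ℂ) ^ m * x n ^ m := by
    rw [← mul_pow, ← mul_pow]
    ring
  simp only [Function.comp_apply, add_zero, hypergeometricTerm, hsplit]
  field_simp

lemma norm_hypergeometricTerm_le (b γ x : ℂ) (hγ : 0 < γ.re) {n m : ℕ} (hn : 1 ≤ n) (hm : m ≤ n) :
    ‖hypergeometricTerm (n + b) (-n) γ x m‖ ≤
      (2 * (2 + ‖b‖) * ‖(n : ℂ) ^ 2 * x‖ / γ.re) ^ m / m.factorial := by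
  have hnR : (1 : ℝ) ≤ n := by exact_mod_cast hn
  have hmR : (m : ℝ) ≤ n := by exact_mod_cast hm
  have hup : ‖(ascPochhammer ℂ m).eval (n + b)‖ ≤ ((2 + ‖b‖) * n) ^ m := by
    refine (norm_ascPochhammer_eval_le _ m).trans (pow_le_pow_left₀ (by positivity) ?_ m)
    have := norm_add_le (n : ℂ) b
    rw [Complex.norm_natCast] at this
    nlinarith [norm_nonneg b]
  have hdown : ‖(ascPochhammer ℂ m).eval (-n : ℂ)‖ ≤ (2 * n) ^ m := by
    refine (norm_ascPochhammer_eval_le _ m).trans (pow_le_pow_left₀ (by positivity) ?_ m)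
    rw [norm_neg, Complex.norm_natCast]
    linarith
  have hden : γ.re ^ m * m.factorial ≤
      ‖(ascPochhammer ℂ m).eval γ * (m.factorial : ℂ)‖ := by
    rw [norm_mul, Complex.norm_natCast]
    gcongr
    exact re_pow_le_norm_ascPochhammer_eval hγ.le m
  have hx : ‖x‖ = ‖(n : ℂ) ^ 2 * x‖ / n ^ 2 := by
    rw [norm_mul, norm_pow, Complex.norm_natCast]
    field_simp
  rw [hypergeometricTerm, norm_mul, norm_div, norm_mul, norm_pow, hx]
  calc ‖(ascPochhammer ℂ m).eval (n + b)‖ * ‖(ascPochhammer ℂ m).eval (-n : ℂ)‖ /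
        ‖(ascPochhammer ℂ m).eval γ * (m.factorial : ℂ)‖ * (‖(n : ℂ) ^ 2 * x‖ / n ^ 2) ^ m
      ≤ ((2 + ‖b‖) * n) ^ m * (2 * n) ^ m / (γ.re ^ m * m.factorial) *
          (‖(n : ℂ) ^ 2 * x‖ / n ^ 2) ^ m := by
        gcongr
    _ = ((2 + ‖b‖) * n * (2 * n) * (‖(n : ℂ) ^ 2 * x‖ / n ^ 2) / γ.re) ^ m / m.factorial := by
        simp only [div_pow, mul_pow]
        ring
    _ = (2 * (2 + ‖b‖) * ‖(n : ℂ) ^ 2 * x‖ / γ.re) ^ m / m.factorial := by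
        congr 2
        field_simp

theorem tendsto_sum_hypergeometricTerm (b w : ℂ) {γ : ℂ} (hγ : 0 < γ.re) {x : ℕ → ℂ}
    (hx : Tendsto (fun n : ℕ => (n : ℂ) ^ 2 * x n) atTop (𝓝 w)) :
    Tendsto (fun n : ℕ => ∑ m ∈ range (n + 1), hypergeometricTerm (n + b) (-n) γ (x n) m) atTop
      (𝓝 (∑' m, (-w) ^ m / ((ascPochhammer ℂ m).eval γ * (m.factorial : ℂ)))) := by
  have hdom : ∀ᶠ n : ℕ in atTop, ∀ m, ‖hypergeometricTerm (n + b) (-n) γ (x n) m‖ ≤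
      (2 * (2 + ‖b‖) * (‖w‖ + 1) / γ.re) ^ m / m.factorial := by
    have hxbdd : ∀ᶠ n : ℕ in atTop, ‖(n : ℂ) ^ 2 * x n‖ ≤ ‖w‖ + 1 :=
      hx.norm.eventually (eventually_le_nhds (lt_add_one ‖w‖))
    filter_upwards [eventually_ge_atTop 1, hxbdd] with n hn hxn m
    rcases le_or_gt m n with hm | hm
    · refine (norm_hypergeometricTerm_le b γ (x n) hγ hn hm).trans ?_
      gcongr
    · rw [hypergeometricTerm_neg_natCast_of_lt _ _ _ hm, norm_zero]
      positivity
  have hlim := tendsto_tsum_of_dominated_convergence (Real.summable_pow_div_factorial _)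
    (tendsto_hypergeometricTerm b γ w hx) hdom
  refine hlim.congr fun n => ?_
  exact tsum_eq_sum fun m hm => hypergeometricTerm_neg_natCast_of_lt _ _ _ (by simpa using hm)

/-- Mehler–Heine type limit: for `k > 0` and `z ∈ ℂ`, the renormalized Gegenbauer
polynomials `Q_n^k(cos(z/n)) = ₂F₁(n+2k, −n, k+1/2; (1−cos(z/n))/2)` (a terminating
hypergeometric sum) converge to the modified Bessel function
`j_{k−1/2}(z) = Γ(k+1/2) Σ_m (−1)^m (z/2)^{2m} / (m! Γ(m+k+1/2))`. -/
theorem gegenbauer_tendsto_bessel (k : ℝ) (hk : 0 < k) (z : ℂ) :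
    Tendsto
      (fun n : ℕ =>
        ∑ m ∈ Finset.range (n + 1),
          (ascPochhammer ℂ m).eval ((n : ℂ) + 2 * k) * (ascPochhammer ℂ m).eval (-(n : ℂ)) /
            ((ascPochhammer ℂ m).eval ((k : ℂ) + 1 / 2) * (m.factorial : ℂ)) *
            ((1 - Complex.cos (z / n)) / 2) ^ m)
      atTop
      (nhds (Complex.Gamma ((k : ℂ) + 1 / 2) *
        ∑' m : ℕ, (-1) ^ m * (z / 2) ^ (2 * m) /
          ((m.factorial : ℂ) * Complex.Gamma ((m : ℂ) + (k : ℂ) + 1 / 2)))) := by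
  have hγ : 0 < ((k : ℂ) + 1 / 2).re := by norm_num; linarith
  have hlim := tendsto_sum_hypergeometricTerm (2 * k) (z ^ 2 / 4) hγ
    (tendsto_natCast_sq_mul_one_sub_cos_div z)
  unfold hypergeometricTerm at hlim
  convert hlim using 2
  rw [← tsum_mul_left]
  refine tsum_congr fun m => ?_
  have hΓ := Complex.Gamma_ne_zero_of_re_pos hγ
  rw [add_assoc, Complex.Gamma_nat_add_eq_ascPochhammer_mul hγ, neg_pow (z ^ 2 / 4), pow_mul,
    div_pow z]
  generalize Complex.Gamma ((k : ℂ) + 1 / 2) = g at hΓ ⊢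
  field_simp
  norm_num
end

section
/- Let λ, ν be elements of the weight lattice P of a crystallographic root system R with positive system R₊, with ν ⊴ λ in the order defined by: ν ⊴ λ iff ν = λ, or λ₊ − ν₊ ∈ Q₊ \ {0}, or (λ₊ = ν₊ and λ ≤ ν in dominance order), where μ₊ denotes the unique dominant element in the W-orbit of μ. Then ν lies in the closed convex hull C(λ) of the W-orbit of λ. -/
open RealInnerProductSpace

/-- The set of reflections `σ_α`, `α ∈ R`, as linear automorphisms. -/
def rootReflections {E : Type*} [NormedAddCommGroup E] [InnerProductSpace ℝ E]
    (R : Finset E) : Set (E ≃ₗ[ℝ] E) :=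
  {w | ∃ α ∈ R, ∀ x, w x = x - (2 * ⟪x, α⟫ / ⟪α, α⟫) • α}

/-- The Weyl group generated by the reflections of the root system `R`. -/
def weylGroup {E : Type*} [NormedAddCommGroup E] [InnerProductSpace ℝ E]
    (R : Finset E) : Subgroup (E ≃ₗ[ℝ] E) :=
  Subgroup.closure (rootReflections R)

/-- The `W`-orbit of `x`. -/
def weylOrbit {E : Type*} [NormedAddCommGroup E] [InnerProductSpace ℝ E]
    (R : Finset E) (x : E) : Set E :=
  {y | ∃ w ∈ weylGroup R, y = w x}

/-- The ℤ₊-span of the positive system `Rplus`. -/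
def QPlus {E : Type*} [NormedAddCommGroup E] [InnerProductSpace ℝ E]
    (Rplus : Finset E) : Set E :=
  {y | ∃ c : E → ℕ, y = ∑ α ∈ Rplus, (c α : ℝ) • α}

/-! Let `K` be the closed convex hull of `W λ`. It is closed, convex and `W`-stable, so it
suffices to show `ν₊ ∈ K`. Let `p` be the point of `K` nearest to `ν₊` and `u = ν₊ - p`.
Testing the variational inequality of `p` at `s_α p ∈ K` and using `⟪α, ν₊⟫ ≥ 0` gives
`⟪u, α⟫ ≥ 0` for every positive root `α`, hence `⟪u, λ₊ - ν₊⟫ ≥ 0` as `λ₊ - ν₊ ∈ Q₊`.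
Testing it at `λ₊ ∈ K` gives `⟪u, λ₊ - ν₊⟫ ≤ -‖u‖²`, so `u = 0`. -/

open Set

section ClosedConvexHull

variable {E F : Type*} [AddCommGroup E] [Module ℝ E] [TopologicalSpace E]
  [IsTopologicalAddGroup E] [ContinuousSMul ℝ E] [AddCommGroup F] [Module ℝ F]
  [TopologicalSpace F] [IsTopologicalAddGroup F] [ContinuousSMul ℝ F]

theorem Set.MapsTo.closure_convexHull {s : Set E} {t : Set F} {f : E →L[ℝ] F}
    (h : MapsTo f s t) : MapsTo f (closure (convexHull ℝ s)) (closure (convexHull ℝ t)) := by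
  simp only [← closedConvexHull_eq_closure_convexHull]
  exact closedConvexHull_min (h.mono_right subset_closedConvexHull)
    (convex_closedConvexHull.linear_preimage f.toLinearMap)
    (isClosed_closedConvexHull.preimage f.continuous)

end ClosedConvexHull

section Projection

variable {E : Type*} [NormedAddCommGroup E] [InnerProductSpace ℝ E]

theorem inner_nonneg_of_mem_QPlus {S : Finset E} {u q : E} (hu : ∀ α ∈ S, 0 ≤ ⟪u, α⟫)
    (hq : q ∈ QPlus S) : 0 ≤ ⟪u, q⟫ := by
  obtain ⟨c, rfl⟩ := hq
  rw [inner_sum]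
  exact Finset.sum_nonneg fun α hα => by
    rw [real_inner_smul_right]
    exact mul_nonneg (Nat.cast_nonneg _) (hu α hα)

theorem inner_sub_nearest_nonneg {K : Set E} {α nu p : E}
    (hproj : ∀ y ∈ K, ⟪nu - p, y - p⟫ ≤ 0)
    (hrefl : p - (2 * ⟪p, α⟫ / ⟪α, α⟫) • α ∈ K) (hnu : 0 ≤ ⟪α, nu⟫) :
    0 ≤ ⟪nu - p, α⟫ := by
  set c := 2 * ⟪p, α⟫ / ⟪α, α⟫
  have hc : 0 ≤ c * ⟪nu - p, α⟫ := by
    have := hproj _ hrefl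
    rw [sub_sub_cancel_left, inner_neg_right, real_inner_smul_right] at this
    linarith
  have hsplit : ⟪α, nu⟫ = ⟪nu - p, α⟫ + ⟪p, α⟫ := by
    rw [inner_sub_left, real_inner_comm]
    ring
  by_contra! hneg
  have hαα : 0 < ⟪α, α⟫ := real_inner_self_pos.mpr (by rintro rfl; simp at hneg)
  have hpα : ⟪p, α⟫ ≤ 0 := by
    have hc' : c ≤ 0 := nonpos_of_mul_nonneg_left hc hneg
    linarith [(div_le_iff₀ hαα).mp hc']
  linarith

theorem IsClosed.mem_of_dominant_of_sub_mem_QPlus [CompleteSpace E] {K : Set E}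
    (hclosed : IsClosed K) (hconv : Convex ℝ K) {S : Finset E}
    (hrefl : ∀ α ∈ S, ∀ x ∈ K, x - (2 * ⟪x, α⟫ / ⟪α, α⟫) • α ∈ K) {lam nu : E}
    (hlam : lam ∈ K) (hnu : ∀ α ∈ S, 0 ≤ ⟪α, nu⟫) (hsub : lam - nu ∈ QPlus S) : nu ∈ K := by
  obtain ⟨p, hpK, hp⟩ :=
    exists_norm_eq_iInf_of_complete_convex ⟨lam, hlam⟩ hclosed.isComplete hconv nu
  rw [norm_eq_iInf_iff_real_inner_le_zero hconv hpK] at hp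
  have hdom : 0 ≤ ⟪nu - p, lam - nu⟫ :=
    inner_nonneg_of_mem_QPlus (fun α hα => inner_sub_nearest_nonneg hp (hrefl α hα p hpK)
      (hnu α hα)) hsub
  have hsplit : ⟪nu - p, lam - nu⟫ = ⟪nu - p, lam - p⟫ - ⟪nu - p, nu - p⟫ := by
    rw [← inner_sub_right, sub_sub_sub_cancel_right]
  have hself : ⟪nu - p, nu - p⟫ ≤ 0 := by linarith [hp lam hlam]
  rwa [sub_eq_zero.mp (real_inner_self_nonpos.mp hself)]

end Projection

section WeylGroup

variable {E : Type*} [NormedAddCommGroup E] [InnerProductSpace ℝ E]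

theorem reflection_orthogonal_singleton_apply (α x : E) :
    (ℝ ∙ α)ᗮ.reflection x = x - (2 * ⟪x, α⟫ / ⟪α, α⟫) • α := by
  rw [Submodule.reflection_orthogonal_apply, Submodule.reflection_singleton_apply,
    real_inner_self_eq_norm_sq, real_inner_comm, neg_sub, RCLike.ofReal_real_eq_id, id,
    ← Nat.cast_smul_eq_nsmul ℝ, smul_smul, Nat.cast_ofNat, mul_div_assoc]

theorem reflection_mem_weylGroup {R : Finset E} {α : E} (hα : α ∈ R) :
    (ℝ ∙ α)ᗮ.reflection.toLinearEquiv ∈ weylGroup R :=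
  Subgroup.subset_closure ⟨α, hα, reflection_orthogonal_singleton_apply α⟩

theorem mapsTo_weylOrbit (R : Finset E) (x : E) {w : E ≃ₗ[ℝ] E} (hw : w ∈ weylGroup R) :
    MapsTo w (weylOrbit R x) (weylOrbit R x) := by
  rintro _ ⟨w', hw', rfl⟩
  exact ⟨w * w', mul_mem hw hw', rfl⟩

theorem mapsTo_closure_convexHull_weylOrbit [FiniteDimensional ℝ E] (R : Finset E) (x : E)
    {w : E ≃ₗ[ℝ] E} (hw : w ∈ weylGroup R) :
    MapsTo w (closure (convexHull ℝ (weylOrbit R x))) (closure (convexHull ℝ (weylOrbit R x))) :=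
  (mapsTo_weylOrbit R x hw).closure_convexHull
    (f := w.toContinuousLinearEquiv.toContinuousLinearMap)

end WeylGroup

theorem mem_closedConvexHull_orbit_of_le_general
    {E : Type*} [NormedAddCommGroup E] [InnerProductSpace ℝ E] [FiniteDimensional ℝ E]
    (R : Finset E)
    (Rplus : Finset E)
    (hpos : (R : Set E) = (Rplus : Set E) ∪ (-(Rplus : Set E)))
    (lam nu : E)
    -- `lamPlus`, `nuPlus` are the dominant representatives of the orbits of `lam`, `nu`
    (lamPlus nuPlus : E)
    (hlamPlus_orbit : lamPlus ∈ weylOrbit R lam)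
    (hnuPlus_orbit : nuPlus ∈ weylOrbit R nu)
    (hnuPlus_dom : ∀ α ∈ Rplus, 0 ≤ ⟪α, nuPlus⟫)
    -- the order `ν ⊴ λ`
    (horder : nu = lam ∨ (lamPlus - nuPlus ∈ QPlus Rplus ∧ lamPlus ≠ nuPlus) ∨
      (lamPlus = nuPlus ∧ nu - lam ∈ QPlus Rplus)) :
    nu ∈ closure (convexHull ℝ (weylOrbit R lam)) := by
  set K := closure (convexHull ℝ (weylOrbit R lam))
  have horbit : weylOrbit R lam ⊆ K := (subset_convexHull ℝ _).trans subset_closure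
  have hrefl : ∀ α ∈ Rplus, ∀ x ∈ K, x - (2 * ⟪x, α⟫ / ⟪α, α⟫) • α ∈ K := by
    intro α hα x hx
    have hαR : α ∈ (R : Set E) := hpos ▸ Or.inl hα
    rw [← reflection_orthogonal_singleton_apply]
    exact mapsTo_closure_convexHull_weylOrbit R lam (reflection_mem_weylGroup hαR) hx
  have hnuPlus : nuPlus ∈ K := by
    rcases horder with rfl | ⟨hsub, -⟩ | ⟨rfl, -⟩
    · exact horbit hnuPlus_orbit
    · exact isClosed_closure.mem_of_dominant_of_sub_mem_QPlus (convex_convexHull ℝ _).closure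
        hrefl (horbit hlamPlus_orbit) hnuPlus_dom hsub
    · exact horbit hlamPlus_orbit
  obtain ⟨w, hw, rfl⟩ := hnuPlus_orbit
  simpa using mapsTo_closure_convexHull_weylOrbit R lam (inv_mem hw) hnuPlus

/-- If `λ, ν` are weights of a reduced crystallographic root system with `ν ⊴ λ`
(in the order used for Heckman-Opdam polynomials), then `ν` lies in the closed convex
hull `C(λ)` of the Weyl group orbit of `λ`. -/
theorem mem_closedConvexHull_orbit_of_le
    {E : Type*} [NormedAddCommGroup E] [InnerProductSpace ℝ E] [FiniteDimensional ℝ E]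
    (R : Finset E)
    (hR0 : ∀ α ∈ R, α ≠ 0)
    (hspan : Submodule.span ℝ (R : Set E) = ⊤)
    (hreduced : ∀ α ∈ R, ∀ r : ℝ, r • α ∈ (R : Set E) → r = 1 ∨ r = -1)
    (hcrys : ∀ α ∈ R, ∀ β ∈ R, ∃ n : ℤ, 2 * ⟪β, α⟫ / ⟪α, α⟫ = (n : ℝ))
    (hRinv : ∀ α ∈ R, ∀ β ∈ R, β - (2 * ⟪β, α⟫ / ⟪α, α⟫) • α ∈ R)
    (Rplus : Finset E)
    (hpos : (R : Set E) = (Rplus : Set E) ∪ (-(Rplus : Set E)))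
    (hdisj : Disjoint (Rplus : Set E) (-(Rplus : Set E)))
    (lam nu : E)
    -- `lam` and `nu` belong to the weight lattice `P`
    (hlamP : ∀ α ∈ R, ∃ n : ℤ, 2 * ⟪lam, α⟫ / ⟪α, α⟫ = (n : ℝ))
    (hnuP : ∀ α ∈ R, ∃ n : ℤ, 2 * ⟪nu, α⟫ / ⟪α, α⟫ = (n : ℝ))
    -- `lamPlus`, `nuPlus` are the dominant representatives of the orbits of `lam`, `nu`
    (lamPlus nuPlus : E)
    (hlamPlus_orbit : lamPlus ∈ weylOrbit R lam)
    (hlamPlus_dom : ∀ α ∈ Rplus, 0 ≤ ⟪α, lamPlus⟫)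
    (hnuPlus_orbit : nuPlus ∈ weylOrbit R nu)
    (hnuPlus_dom : ∀ α ∈ Rplus, 0 ≤ ⟪α, nuPlus⟫)
    -- the order `ν ⊴ λ`
    (horder : nu = lam ∨ (lamPlus - nuPlus ∈ QPlus Rplus ∧ lamPlus ≠ nuPlus) ∨
      (lamPlus = nuPlus ∧ nu - lam ∈ QPlus Rplus)) :
    nu ∈ closure (convexHull ℝ (weylOrbit R lam)) :=
  mem_closedConvexHull_orbit_of_le_general R Rplus hpos lam nu lamPlus nuPlus hlamPlus_orbit
    hnuPlus_orbit hnuPlus_dom horder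
end

section
/- Let x be in the closed Weyl chamber C of a finite reflection group W on a Euclidean space 𝔞, and let C* be the dual cone of C. Then for y ∈ C: y ∈ C(x) (the closed convex hull of the orbit Wx) if and only if x − y ∈ C*. -/
/-!
Fix a regular vector `u` and let `C` be the chamber of the roots positive on `u`. Reflecting an
orbit point in a positive root on which it is negative raises its pairing with `u` and with every
`v ∈ C`; climbing this way from an orbit point `z` ends at an orbit point `t ∈ C` with
`⟪z, v⟫ ≤ ⟪t, v⟫` for all `v ∈ C`. And `C` meets each orbit only once, by the simple-root and
exchange-condition argument. Hence `x ∈ C` maximises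
`⟪·, v⟫` on its orbit for each `v ∈ C`, which is one inclusion; the other is Hahn–Banach, after
moving the separating functional into `C` by the same climbing.

An arbitrary sign choice `Rplus` only gives a face of such a chamber: take `u` close to a relative
interior point `u₀` of `chamber Rplus`; summing over the reflection group of the roots orthogonal
to `u₀` maps `C` onto that face and fixes the face pointwise.
-/

open RealInnerProductSpace

namespace ReflectionGroup

variable {E : Type*} [NormedAddCommGroup E] [InnerProductSpace ℝ E]

noncomputable def rootReflection (α : E) : E ≃ₗ[ℝ] E :=
  LinearEquiv.ofInvolutive
    { toFun := fun x => x - (2 * ⟪x, α⟫ / ⟪α, α⟫) • α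
      map_add' := fun x y => by
        simp only [inner_add_left, mul_add, add_div, add_smul]; abel
      map_smul' := fun c x => by
        simp only [real_inner_smul_left, smul_sub, smul_smul, RingHom.id_apply]
        congr 2; ring }
    (fun x => by
      rcases eq_or_ne α 0 with rfl | hα
      · simp
      · have hαα : ⟪α, α⟫ ≠ 0 := by simpa using hα
        simp only [LinearMap.coe_mk, AddHom.coe_mk, inner_sub_left, real_inner_smul_left]
        rw [sub_sub, ← add_smul, sub_eq_self, smul_eq_zero]
        left
        field_simp
        ring)

@[simp]
lemma rootReflection_apply (α x : E) :
    rootReflection α x = x - (2 * ⟪x, α⟫ / ⟪α, α⟫) • α := rfl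

@[simp]
lemma rootReflection_rootReflection (α x : E) : rootReflection α (rootReflection α x) = x :=
  (rootReflection α).symm_apply_apply x

lemma rootReflection_mul_self (α : E) : rootReflection α * rootReflection α = 1 :=
  LinearEquiv.ext (rootReflection_rootReflection α)

lemma rootReflection_inv (α : E) : (rootReflection α)⁻¹ = rootReflection α :=
  inv_eq_of_mul_eq_one_left (rootReflection_mul_self α)

lemma inner_rootReflection_rootReflection (α x y : E) :
    ⟪rootReflection α x, rootReflection α y⟫ = ⟪x, y⟫ := by
  rcases eq_or_ne α 0 with rfl | hα
  · simp
  have hαα : ⟪α, α⟫ ≠ 0 := by simpa using hα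
  simp only [rootReflection_apply, inner_sub_left, inner_sub_right, real_inner_smul_left,
    real_inner_smul_right, real_inner_comm α x, real_inner_comm α y]
  field_simp
  ring

lemma rootReflection_self {α : E} (hα : α ≠ 0) : rootReflection α α = -α := by
  have hαα : ⟪α, α⟫ ≠ 0 := by simpa using hα
  rw [rootReflection_apply, mul_div_assoc, div_self hαα, mul_one, two_smul]
  abel

lemma rootReflection_eq_self_iff {α : E} (hα : α ≠ 0) (x : E) :
    rootReflection α x = x ↔ ⟪x, α⟫ = 0 := by
  simp [hα]

lemma rootReflection_smul {c : ℝ} (hc : c ≠ 0) (α : E) :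
    rootReflection (c • α) = rootReflection α := by
  rcases eq_or_ne α 0 with rfl | hα
  · simp
  have hαα : ⟪α, α⟫ ≠ 0 := by simpa using hα
  ext x
  simp only [rootReflection_apply, real_inner_smul_left, real_inner_smul_right, smul_smul]
  field_simp

lemma rootReflection_neg (α : E) : rootReflection (-α) = rootReflection α := by
  rw [← neg_one_smul ℝ α, rootReflection_smul (by norm_num)]

lemma rootReflection_map {w : E ≃ₗ[ℝ] E} (hw : ∀ a b, ⟪w a, w b⟫ = ⟪a, b⟫) (α : E) :
    rootReflection (w α) = w * rootReflection α * w⁻¹ := by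
  ext x
  have hx : w (w⁻¹ x) = x := w.apply_symm_apply x
  have hxα : ⟪x, w α⟫ = ⟪w⁻¹ x, α⟫ := by rw [← hw (w⁻¹ x) α, hx]
  simp only [LinearEquiv.mul_apply, rootReflection_apply, map_sub, map_smul, hw α α, hxα, hx]

lemma inner_nonneg_of_mem_hull {s : Set E} {v p : E} (hv : ∀ a ∈ s, 0 ≤ ⟪a, v⟫)
    (hp : p ∈ PointedCone.hull ℝ s) : 0 ≤ ⟪p, v⟫ := by
  have : v ∈ PointedCone.dual (innerₗ E) (PointedCone.hull ℝ s) := by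
    rw [PointedCone.dual_hull]
    exact fun a ha => hv a ha
  exact this hp

lemma exists_inner_pos_of_mem_hull {s : Set E} {v p : E} (hp : p ∈ PointedCone.hull ℝ s)
    (hpv : 0 < ⟪p, v⟫) : ∃ a ∈ s, 0 < ⟪a, v⟫ := by
  by_contra! h
  have := inner_nonneg_of_mem_hull (v := -v) (fun a ha => by simpa using h a ha) hp
  rw [inner_neg_right] at this
  linarith

lemma inner_pos_of_mem_hull {s : Set E} {u p : E} (hu : ∀ a ∈ s, 0 < ⟪a, u⟫)
    (hp : p ∈ PointedCone.hull ℝ s) (hp0 : p ≠ 0) : 0 < ⟪p, u⟫ := by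
  suffices p = 0 ∨ 0 < ⟪p, u⟫ from this.resolve_left hp0
  clear hp0
  induction hp using Submodule.span_induction with
  | mem a ha => exact .inr (hu a ha)
  | zero => exact .inl rfl
  | add p q _ _ hp hq =>
    rcases hp with rfl | hp
    · simpa using hq
    rcases hq with rfl | hq
    · simpa using Or.inr hp
    exact .inr (by rw [inner_add_left]; linarith)
  | smul c p _ hp =>
    rcases hp with rfl | hp
    · simp
    rcases eq_or_lt_of_le c.2 with hc | hc
    · left; rw [← Nonneg.coe_smul, ← hc, zero_smul]
    · right; rw [← Nonneg.coe_smul, real_inner_smul_left]; exact mul_pos hc hp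

lemma eq_zero_of_add_eq_zero_of_mem_hull {s : Set E} {u p q : E} (hu : ∀ a ∈ s, 0 < ⟪a, u⟫)
    (hp : p ∈ PointedCone.hull ℝ s) (hq : q ∈ PointedCone.hull ℝ s) (hpq : p + q = 0) :
    p = 0 := by
  by_contra hp0
  have h := congrArg (⟪·, u⟫) hpq
  simp only [inner_add_left, inner_zero_left] at h
  linarith [inner_pos_of_mem_hull hu hp hp0, inner_nonneg_of_mem_hull (fun a ha => (hu a ha).le) hq]

variable {R : Finset E}

def IsReflectionStable (R : Finset E) : Prop := ∀ α ∈ R, ∀ β ∈ R, rootReflection α β ∈ R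

def IsRegular (R : Finset E) (u : E) : Prop := ∀ α ∈ R, ⟪α, u⟫ ≠ 0

lemma mem_rootReflections {w : E ≃ₗ[ℝ] E} :
    w ∈ rootReflections R ↔ ∃ α ∈ R, rootReflection α = w :=
  ⟨fun ⟨α, hα, hw⟩ => ⟨α, hα, LinearEquiv.ext fun x => (hw x).symm⟩,
    fun ⟨α, hα, hw⟩ => ⟨α, hα, fun _ => hw ▸ rfl⟩⟩

lemma rootReflection_mem_weylGroup {α : E} (hα : α ∈ R) : rootReflection α ∈ weylGroup R :=
  Subgroup.subset_closure (mem_rootReflections.2 ⟨α, hα, rfl⟩)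

lemma weylGroup_mono {R' : Finset E} (h : R' ⊆ R) : weylGroup R' ≤ weylGroup R :=
  Subgroup.closure_le _ |>.2 fun _ hw =>
    let ⟨_, hα, hw⟩ := mem_rootReflections.1 hw
    hw ▸ rootReflection_mem_weylGroup (h hα)

@[elab_as_elim]
lemma weylGroup_induction {p : (w : E ≃ₗ[ℝ] E) → w ∈ weylGroup R → Prop}
    (reflection : ∀ α (hα : α ∈ R), p (rootReflection α) (rootReflection_mem_weylGroup hα))
    (one : p 1 (one_mem _)) (mul : ∀ v w hv hw, p v hv → p w hw → p (v * w) (mul_mem hv hw))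
    {w : E ≃ₗ[ℝ] E} (hw : w ∈ weylGroup R) : p w hw := by
  induction hw using Subgroup.closure_induction'' with
  | mem w hw =>
    obtain ⟨α, hα, rfl⟩ := mem_rootReflections.1 hw
    exact reflection α hα
  | inv_mem w hw =>
    obtain ⟨α, hα, rfl⟩ := mem_rootReflections.1 hw
    simpa only [rootReflection_inv] using reflection α hα
  | one => exact one
  | mul v w hv hw hpv hpw => exact mul v w hv hw hpv hpw

lemma inner_map_map_of_mem_weylGroup {w : E ≃ₗ[ℝ] E} (hw : w ∈ weylGroup R) (a b : E) :
    ⟪w a, w b⟫ = ⟪a, b⟫ := by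
  induction hw using weylGroup_induction generalizing a b with
  | reflection α _ => exact inner_rootReflection_rootReflection α a b
  | one => rfl
  | mul v w _ _ hv hw => exact (hv _ _).trans (hw a b)

lemma map_mem_of_mem_weylGroup (hR : IsReflectionStable R)
    {w : E ≃ₗ[ℝ] E} (hw : w ∈ weylGroup R) {β : E} (hβ : β ∈ R) : w β ∈ R := by
  induction hw using weylGroup_induction generalizing β with
  | reflection α hα => exact hR α hα β hβ
  | one => exact hβ
  | mul v w _ _ hv hw => exact hv (hw hβ)

lemma map_eq_self_of_mem_weylGroup {w : E ≃ₗ[ℝ] E} (hw : w ∈ weylGroup R) {x : E}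
    (hx : ∀ α ∈ R, ⟪x, α⟫ = 0) : w x = x := by
  induction hw using weylGroup_induction with
  | reflection α hα => simp [hx α hα]
  | one => rfl
  | mul v w _ _ hv hw => rw [LinearEquiv.mul_apply, hw, hv]

lemma finite_weylGroup (hspan : Submodule.span ℝ (R : Set E) = ⊤)
    (hR : IsReflectionStable R) : Finite (weylGroup R) := by
  refine Finite.of_injective
    (fun w : weylGroup R => fun α : R => (⟨w.1 α, map_mem_of_mem_weylGroup hR w.2 α.2⟩ : R))
    fun w w' h => Subtype.ext <| LinearEquiv.toLinearMap_injective <| LinearMap.ext_on hspan ?_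
  intro α hα
  exact congrArg Subtype.val (congrFun h ⟨α, hα⟩)

lemma self_mem_weylOrbit (x : E) : x ∈ weylOrbit R x := ⟨1, one_mem _, rfl⟩

lemma map_mem_weylOrbit {w : E ≃ₗ[ℝ] E} (hw : w ∈ weylGroup R) {x z : E}
    (hz : z ∈ weylOrbit R x) : w z ∈ weylOrbit R x := by
  obtain ⟨v, hv, rfl⟩ := hz
  exact ⟨w * v, mul_mem hw hv, rfl⟩

lemma mem_weylOrbit_comm {x z : E} (hz : z ∈ weylOrbit R x) : x ∈ weylOrbit R z := by
  obtain ⟨w, hw, rfl⟩ := hz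
  exact ⟨w⁻¹, inv_mem hw, (w.symm_apply_apply x).symm⟩

lemma finite_weylOrbit [Finite (weylGroup R)] (x : E) : (weylOrbit R x).Finite := by
  convert Set.finite_range fun w : weylGroup R => (w : E ≃ₗ[ℝ] E) x
  ext z
  exact ⟨fun ⟨w, hw, hz⟩ => ⟨⟨w, hw⟩, hz.symm⟩, fun ⟨w, hz⟩ => ⟨w, w.2, hz.symm⟩⟩

variable {u : E}

noncomputable def posRoots (R : Finset E) (u : E) : Finset E := {α ∈ R | 0 < ⟪α, u⟫}

def chamber (P : Finset E) : Set E := {v | ∀ α ∈ P, 0 ≤ ⟪α, v⟫}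

lemma mem_posRoots {α : E} : α ∈ posRoots R u ↔ α ∈ R ∧ 0 < ⟪α, u⟫ := Finset.mem_filter

lemma ne_zero_of_mem_posRoots {α : E} (hα : α ∈ posRoots R u) : α ≠ 0 := by
  rintro rfl
  simp [mem_posRoots] at hα

lemma neg_notMem_posRoots {α : E} (hα : α ∈ posRoots R u) : -α ∉ posRoots R u := fun h => by
  have := (mem_posRoots.1 h).2
  rw [inner_neg_left] at this
  linarith [(mem_posRoots.1 hα).2]

lemma inner_rootReflection_left (α x y : E) :
    ⟪rootReflection α x, y⟫ = ⟪x, y⟫ - 2 * ⟪x, α⟫ / ⟪α, α⟫ * ⟪α, y⟫ := by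
  rw [rootReflection_apply, inner_sub_left, real_inner_smul_left]

lemma exists_mem_chamber_inner_le [Finite (weylGroup R)] (u : E) {x z : E}
    (hz : z ∈ weylOrbit R x) : ∃ t ∈ weylOrbit R x, t ∈ chamber (posRoots R u) ∧
      ∀ v ∈ chamber (posRoots R u), ⟪z, v⟫ ≤ ⟪t, v⟫ := by
  set A := {t ∈ weylOrbit R x | ∀ v ∈ chamber (posRoots R u), ⟪z, v⟫ ≤ ⟪t, v⟫}
  obtain ⟨t, ⟨htO, htA⟩, htmax⟩ := Set.exists_max_image A (⟪·, u⟫)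
    ((finite_weylOrbit x).subset fun _ h => h.1) ⟨z, hz, fun _ _ => le_rfl⟩
  refine ⟨t, htO, fun α hα => ?_, htA⟩
  by_contra! htα
  obtain ⟨hαR, hαu⟩ := mem_posRoots.1 hα
  have hαα : 0 < ⟪α, α⟫ := real_inner_self_pos.2 (ne_zero_of_mem_posRoots hα)
  have hk : 2 * ⟪t, α⟫ / ⟪α, α⟫ < 0 := by
    rw [real_inner_comm]
    exact div_neg_of_neg_of_pos (by linarith) hαα
  have hup : ⟪rootReflection α t, u⟫ ≤ ⟪t, u⟫ := by
    refine htmax _ ⟨map_mem_weylOrbit (rootReflection_mem_weylGroup hαR) htO, fun v hv => ?_⟩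
    rw [inner_rootReflection_left]
    nlinarith [htA v hv, hv α hα]
  rw [inner_rootReflection_left] at hup
  nlinarith

lemma mem_posRoots_or_neg_mem (hR : IsReflectionStable R) (hu : IsRegular R u)
    {α : E} (hα : α ∈ R) :
    α ∈ posRoots R u ∨ -α ∈ posRoots R u := by
  rcases (hu α hα).lt_or_gt with h | h
  · have hα0 : α ≠ 0 := by rintro rfl; simp at h
    refine .inr (mem_posRoots.2 ⟨?_, by rw [inner_neg_left]; linarith⟩)
    simpa [rootReflection_self hα0] using hR α hα α hα
  · exact .inl (mem_posRoots.2 ⟨hα, h⟩)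

lemma exists_simpleRoots (R : Finset E) (u : E) :
    ∃ Δ ⊆ posRoots R u, (posRoots R u : Set E) ⊆ PointedCone.hull ℝ (Δ : Set E) ∧
      ∀ δ ∈ Δ, δ ∉ PointedCone.hull ℝ ((Δ : Set E) \ {δ}) := by
  classical
  obtain ⟨Δ, hΔ, hmin⟩ := Finset.exists_min_image
    ((posRoots R u).powerset.filter
      fun Δ : Finset E => (posRoots R u : Set E) ⊆ PointedCone.hull ℝ (Δ : Set E))
    Finset.card ⟨posRoots R u, by simp⟩
  rw [Finset.mem_filter, Finset.mem_powerset] at hΔ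
  refine ⟨Δ, hΔ.1, hΔ.2, fun δ hδ hδΔ => ?_⟩
  have hgen : (posRoots R u : Set E) ⊆ PointedCone.hull ℝ (Δ.erase δ : Set E) := by
    rw [Finset.coe_erase]
    refine hΔ.2.trans (Submodule.span_le.2 fun γ hγ => ?_)
    rcases eq_or_ne γ δ with rfl | hne
    · exact hδΔ
    · exact PointedCone.subset_hull ⟨hγ, hne⟩
  have := hmin (Δ.erase δ) (Finset.mem_filter.2
    ⟨Finset.mem_powerset.2 ((Finset.erase_subset δ Δ).trans hΔ.1), hgen⟩)
  rw [Finset.card_erase_of_mem hδ] at this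
  have := Finset.card_pos.2 ⟨δ, hδ⟩
  omega

noncomputable def simpleRoots (R : Finset E) (u : E) : Finset E :=
  (exists_simpleRoots R u).choose

lemma simpleRoots_subset : simpleRoots R u ⊆ posRoots R u :=
  (exists_simpleRoots R u).choose_spec.1

lemma posRoots_subset_hull_simpleRoots :
    (posRoots R u : Set E) ⊆ PointedCone.hull ℝ (simpleRoots R u : Set E) :=
  (exists_simpleRoots R u).choose_spec.2.1

lemma notMem_hull_simpleRoots_sdiff {δ : E} (hδ : δ ∈ simpleRoots R u) :
    δ ∉ PointedCone.hull ℝ ((simpleRoots R u : Set E) \ {δ}) :=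
  (exists_simpleRoots R u).choose_spec.2.2 δ hδ

/-- Write `β` and `-rootReflection δ β` as `a • δ + k` with `k` in the cone `K` of the other simple
roots. The sum of the two `K`-parts is a multiple of `δ`; a positive multiple would put `δ` in `K`,
against minimality, and otherwise `u` shows that the `K`-parts vanish. -/
lemma exists_eq_smul_of_neg_rootReflection_mem_posRoots {δ β : E} (hδ : δ ∈ simpleRoots R u)
    (hβ : β ∈ posRoots R u) (h : -rootReflection δ β ∈ posRoots R u) : ∃ c : ℝ, β = c • δ := by
  set K := PointedCone.hull ℝ ((simpleRoots R u : Set E) \ {δ})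
  have hKP : K ≤ PointedCone.hull ℝ (posRoots R u : Set E) :=
    Submodule.span_mono fun γ hγ => simpleRoots_subset hγ.1
  have hδP : δ ∈ posRoots R u := simpleRoots_subset hδ
  have hdecomp : ∀ p ∈ posRoots R u, ∃ a : ℝ, 0 ≤ a ∧ ∃ k ∈ K, p = a • δ + k := by
    intro p hp
    have hp : p ∈ PointedCone.hull ℝ _ := posRoots_subset_hull_simpleRoots hp
    rw [← Set.insert_sdiff_self_of_mem (Finset.mem_coe.2 hδ), Submodule.mem_span_insert] at hp
    obtain ⟨a, k, hk, rfl⟩ := hp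
    exact ⟨(a : ℝ), a.2, k, hk, by rw [Nonneg.coe_smul]⟩
  obtain ⟨a, ha, k₁, hk₁, hβ₁⟩ := hdecomp β hβ
  obtain ⟨b, hb, k₂, hk₂, hβ₂⟩ := hdecomp _ h
  set m := 2 * ⟪β, δ⟫ / ⟪δ, δ⟫
  rw [rootReflection_apply, neg_sub] at hβ₂
  have hsum : k₁ + k₂ = (m - a - b) • δ := by linear_combination (norm := module) -hβ₁ - hβ₂
  rcases lt_or_ge 0 (m - a - b) with hpos | hle
  · exact absurd ((K.smul_mem_iff hpos).1 (hsum ▸ K.add_mem hk₁ hk₂))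
      (notMem_hull_simpleRoots_sdiff hδ)
  · have hk₁0 : k₁ = 0 := by
      refine eq_zero_of_add_eq_zero_of_mem_hull (s := posRoots R u) (q := k₂ + (a + b - m) • δ)
        (fun α hα => (mem_posRoots.1 hα).2) (hKP hk₁) (add_mem (hKP hk₂) ?_) ?_
      · exact PointedCone.smul_mem _ (by linarith) (PointedCone.subset_hull (Finset.mem_coe.2 hδP))
      · rw [← add_assoc, hsum]; module
    exact ⟨a, by rw [hβ₁, hk₁0, add_zero]⟩

lemma rootReflection_mem_posRoots_or_eq (hR : IsReflectionStable R) (hu : IsRegular R u)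
    {δ β : E} (hδ : δ ∈ simpleRoots R u) (hβ : β ∈ posRoots R u) :
    rootReflection δ β ∈ posRoots R u ∨ rootReflection β = rootReflection δ := by
  have hδR := (mem_posRoots.1 (simpleRoots_subset hδ)).1
  refine (mem_posRoots_or_neg_mem hR hu (hR δ hδR β (mem_posRoots.1 hβ).1)).imp id fun h => ?_
  obtain ⟨c, rfl⟩ := exists_eq_smul_of_neg_rootReflection_mem_posRoots hδ hβ h
  exact rootReflection_smul (left_ne_zero_of_smul (ne_zero_of_mem_posRoots hβ)) δ

def simpleReflections (R : Finset E) (u : E) : Set (E ≃ₗ[ℝ] E) :=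
  rootReflection '' (simpleRoots R u : Set E)

lemma simpleReflections_subset_weylGroup : simpleReflections R u ⊆ weylGroup R := by
  rintro _ ⟨δ, hδ, rfl⟩
  exact rootReflection_mem_weylGroup (mem_posRoots.1 (simpleRoots_subset hδ)).1

/-- Induction on the height `⟪α, u⟫`: a non-simple positive root `α` pairs positively with some
simple root `δ`, and `rootReflection δ α` is a lower positive root. -/
lemma rootReflection_mem_closure_simpleReflections (hR : IsReflectionStable R) (hu : IsRegular R u)
    {α : E} (hα : α ∈ posRoots R u) :
    rootReflection α ∈ Subgroup.closure (simpleReflections R u) := by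
  classical
  set W := Subgroup.closure (simpleReflections R u)
  by_contra hαW
  obtain ⟨α, hα, hmin⟩ := Finset.exists_min_image
    ((posRoots R u).filter fun α => rootReflection α ∉ W) (⟪·, u⟫) ⟨α, by simp [hα, hαW]⟩
  rw [Finset.mem_filter] at hα
  obtain ⟨hαP, hαW⟩ := hα
  have hα0 := ne_zero_of_mem_posRoots hαP
  obtain ⟨δ, hδ, hδα⟩ := exists_inner_pos_of_mem_hull (posRoots_subset_hull_simpleRoots hαP)
    (real_inner_self_pos.2 hα0)
  have hδW : rootReflection δ ∈ W := Subgroup.subset_closure ⟨δ, hδ, rfl⟩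
  rcases rootReflection_mem_posRoots_or_eq hR hu hδ hαP with hβ | heq
  · have hδP := simpleRoots_subset hδ
    have hlt : ⟪rootReflection δ α, u⟫ < ⟪α, u⟫ := by
      have hδδ : 0 < ⟪δ, δ⟫ := real_inner_self_pos.2 (ne_zero_of_mem_posRoots hδP)
      have : 0 < 2 * ⟪α, δ⟫ / ⟪δ, δ⟫ := by rw [real_inner_comm]; positivity
      rw [inner_rootReflection_left]
      nlinarith [(mem_posRoots.1 hδP).2]
    have hβW : rootReflection (rootReflection δ α) ∈ W := by
      by_contra hβW
      exact hlt.not_ge (hmin _ (Finset.mem_filter.2 ⟨hβ, hβW⟩))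
    rw [rootReflection_map (inner_rootReflection_rootReflection δ), rootReflection_inv] at hβW
    have := W.mul_mem (W.mul_mem hδW hβW) hδW
    rw [mul_assoc, mul_assoc, rootReflection_mul_self, mul_one, ← mul_assoc,
      rootReflection_mul_self, one_mul] at this
    exact hαW this
  · exact hαW (heq ▸ hδW)

lemma exists_list_simpleReflections (hR : IsReflectionStable R) (hu : IsRegular R u)
    {w : E ≃ₗ[ℝ] E} (hw : w ∈ weylGroup R) :
    ∃ L : List (E ≃ₗ[ℝ] E), (∀ g ∈ L, g ∈ simpleReflections R u) ∧ L.prod = w := by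
  have hle : weylGroup R ≤ Subgroup.closure (simpleReflections R u) := by
    refine (Subgroup.closure_le _).2 fun g hg => ?_
    obtain ⟨α, hα, rfl⟩ := mem_rootReflections.1 hg
    rcases mem_posRoots_or_neg_mem hR hu hα with h | h
    · exact rootReflection_mem_closure_simpleReflections hR hu h
    · rw [← rootReflection_neg]
      exact rootReflection_mem_closure_simpleReflections hR hu h
  have hfin : ∀ g ∈ simpleReflections R u, IsOfFinOrder g := by
    rintro _ ⟨δ, -, rfl⟩
    exact isOfFinOrder_iff_pow_eq_one.2 ⟨2, two_pos, by rw [sq, rootReflection_mul_self]⟩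
  have hw' := hle hw
  rw [← Subgroup.mem_toSubmonoid, Subgroup.closure_toSubmonoid_of_isOfFinOrder hfin] at hw'
  exact Submonoid.exists_list_of_mem_closure hw'

lemma list_prod_mem_weylGroup {L : List (E ≃ₗ[ℝ] E)}
    (hL : ∀ g ∈ L, g ∈ simpleReflections R u) : L.prod ∈ weylGroup R :=
  Subgroup.list_prod_mem _ fun g hg => simpleReflections_subset_weylGroup (hL g hg)

/-- The exchange condition. -/
lemma exists_eq_append_cons_of_neg_mem_posRoots (hR : IsReflectionStable R) (hu : IsRegular R u)
    {β : E} (hβ : β ∈ posRoots R u) :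
    ∀ L : List (E ≃ₗ[ℝ] E), (∀ g ∈ L, g ∈ simpleReflections R u) →
      -(L.prod β) ∈ posRoots R u →
      ∃ A g B, L = A ++ g :: B ∧ g * B.prod = B.prod * rootReflection β
  | [], _, h => absurd h (by simpa using neg_notMem_posRoots hβ)
  | g :: L, hL, h => by
    have hL' : ∀ g ∈ L, g ∈ simpleReflections R u := fun g' hg' => hL g' (.tail g hg')
    have hLW := list_prod_mem_weylGroup hL'
    rcases mem_posRoots_or_neg_mem hR hu (map_mem_of_mem_weylGroup hR hLW (mem_posRoots.1 hβ).1)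
      with hγ | hγ
    · obtain ⟨e, he, rfl⟩ := hL g List.mem_cons_self
      rw [List.prod_cons, LinearEquiv.mul_apply] at h
      have heq := (rootReflection_mem_posRoots_or_eq hR hu he hγ).resolve_left
        fun h' => neg_notMem_posRoots h' h
      refine ⟨[], rootReflection e, L, rfl, ?_⟩
      rw [← heq, rootReflection_map (inner_map_map_of_mem_weylGroup hLW), inv_mul_cancel_right]
    · obtain ⟨A, g', B, rfl, hB⟩ := exists_eq_append_cons_of_neg_mem_posRoots hR hu hβ L hL' hγ
      exact ⟨g :: A, g', B, rfl, hB⟩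

lemma inner_rootReflection_self_left {δ : E} (hδ : δ ≠ 0) (x : E) :
    ⟪δ, rootReflection δ x⟫ = -⟪δ, x⟫ := by
  rw [← inner_rootReflection_rootReflection δ, rootReflection_self hδ,
    rootReflection_rootReflection, inner_neg_left]

lemma list_prod_apply_eq_self (hR : IsReflectionStable R) (hu : IsRegular R u) {x : E}
    (hx : x ∈ chamber (posRoots R u)) (L : List (E ≃ₗ[ℝ] E))
    (hL : ∀ g ∈ L, g ∈ simpleReflections R u) (hLx : L.prod x ∈ chamber (posRoots R u)) :
    L.prod x = x := by
  induction h : L.length using Nat.strong_induction_on generalizing L with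
  | _ n ih =>
  rcases L.eq_nil_or_concat with rfl | ⟨L, g, rfl⟩
  · simp
  obtain ⟨δ, hδ, rfl⟩ := hL g (by simp)
  have hL' : ∀ g ∈ L, g ∈ simpleReflections R u := fun g hg => hL g (by simp [hg])
  have hLW := list_prod_mem_weylGroup hL'
  have hδP := simpleRoots_subset hδ
  rw [List.prod_concat] at hLx ⊢
  rw [List.length_concat] at h
  -- Either the whole word sends `δ` to a negative root, and then `x` and its image both lying in
  -- the chamber force `⟪x, δ⟫ = 0`; or `L.prod` already does, and the exchange condition cancels
  -- the last letter against an earlier one.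
  rcases mem_posRoots_or_neg_mem hR hu (map_mem_of_mem_weylGroup hR hLW (mem_posRoots.1 hδP).1)
    with hLδ | hLδ
  · have hδ0 := ne_zero_of_mem_posRoots hδP
    have hδx : ⟪x, δ⟫ = 0 := by
      have := hLx _ hLδ
      rw [LinearEquiv.mul_apply, inner_map_map_of_mem_weylGroup hLW,
        inner_rootReflection_self_left hδ0] at this
      rw [real_inner_comm]
      linarith [hx δ hδP]
    rw [LinearEquiv.mul_apply, (rootReflection_eq_self_iff hδ0 x).2 hδx] at hLx ⊢
    exact ih _ (by omega) L hL' hLx rfl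
  · obtain ⟨A, g', B, rfl, hB⟩ := exists_eq_append_cons_of_neg_mem_posRoots hR hu hδP L hL' hLδ
    have hAB : (A ++ g' :: B).prod * rootReflection δ = (A ++ B).prod := by
      rw [List.prod_append, List.prod_cons, hB, mul_assoc, mul_assoc, rootReflection_mul_self,
        mul_one, List.prod_append]
    rw [hAB] at hLx ⊢
    exact ih _ (by simp at h ⊢; omega) (A ++ B)
      (fun g hg => hL' g (by simp at hg ⊢; tauto)) hLx rfl

lemma eq_of_mem_chamber_of_mem_weylOrbit (hR : IsReflectionStable R) (hu : IsRegular R u)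
    {x t : E} (hx : x ∈ chamber (posRoots R u)) (ht : t ∈ chamber (posRoots R u))
    (hxt : t ∈ weylOrbit R x) : t = x := by
  obtain ⟨w, hw, rfl⟩ := hxt
  obtain ⟨L, hL, rfl⟩ := exists_list_simpleReflections hR hu hw
  exact list_prod_apply_eq_self hR hu hx L hL ht

lemma inner_le_of_mem_weylOrbit (hR : IsReflectionStable R) (hu : IsRegular R u)
    [Finite (weylGroup R)] {x v z : E} (hx : x ∈ chamber (posRoots R u))
    (hv : v ∈ chamber (posRoots R u)) (hz : z ∈ weylOrbit R x) : ⟪z, v⟫ ≤ ⟪x, v⟫ := by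
  obtain ⟨t, htO, htC, hzt⟩ := exists_mem_chamber_inner_le u hz
  rw [← eq_of_mem_chamber_of_mem_weylOrbit hR hu hx htC htO]
  exact hzt v hv

theorem mem_closure_convexHull_weylOrbit_iff (hR : IsReflectionStable R) (hu : IsRegular R u)
    [Finite (weylGroup R)] [CompleteSpace E] {x y : E}
    (hx : x ∈ chamber (posRoots R u)) (hy : y ∈ chamber (posRoots R u)) :
    y ∈ closure (convexHull ℝ (weylOrbit R x)) ↔
      ∀ c ∈ chamber (posRoots R u), 0 ≤ ⟪x - y, c⟫ := by
  constructor
  · intro hyO c hc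
    have hsub : closure (convexHull ℝ (weylOrbit R x)) ⊆ {z | ⟪z, c⟫ ≤ ⟪x, c⟫} :=
      closure_minimal
        (convexHull_min (fun z hz => inner_le_of_mem_weylOrbit hR hu hx hc hz)
          (convex_halfSpace_le (innerₗ E |>.flip c).isLinear _))
        (isClosed_le (continuous_id.inner continuous_const) continuous_const)
    rw [inner_sub_left, sub_nonneg]
    exact hsub hyO
  · intro hdual
    by_contra hyO
    obtain ⟨f, r, hfO, hfy⟩ := geometric_hahn_banach_closed_point
      (convex_convexHull ℝ _).closure isClosed_closure hyO
    set v := (InnerProductSpace.toDual ℝ E).symm f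
    have hv : ∀ a, ⟪v, a⟫ = f a := fun a => InnerProductSpace.toDual_symm_apply
    obtain ⟨_, ⟨w, hw, rfl⟩, hwv, -⟩ :=
      exists_mem_chamber_inner_le u (self_mem_weylOrbit (R := R) v)
    have hx' : ⟪w v, x⟫ < r := by
      rw [← inner_map_map_of_mem_weylGroup (inv_mem hw),
        show w⁻¹ (w v) = v from w.symm_apply_apply v, hv]
      exact hfO _ (subset_closure (subset_convexHull ℝ _ ⟨w⁻¹, inv_mem hw, rfl⟩))
    have hy' : ⟪v, y⟫ ≤ ⟪w v, y⟫ :=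
      inner_le_of_mem_weylOrbit hR hu hwv hy (mem_weylOrbit_comm ⟨w, hw, rfl⟩)
    have := hdual _ hwv
    rw [inner_sub_left, real_inner_comm (w v) x, real_inner_comm (w v) y] at this
    linarith [hv y]

lemma exists_mem_chamber_forall_inner_eq_zero (P : Finset E) :
    ∃ u₀ ∈ chamber P, ∀ α ∈ P, ⟪α, u₀⟫ = 0 → ∀ c ∈ chamber P, ⟪α, c⟫ = 0 := by
  have : ∀ α ∈ P, ∃ c ∈ chamber P, (∃ c' ∈ chamber P, ⟪α, c'⟫ ≠ 0) → ⟪α, c⟫ ≠ 0 := by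
    intro α _
    by_cases h : ∃ c' ∈ chamber P, ⟪α, c'⟫ ≠ 0
    · obtain ⟨c', hc', hne⟩ := h
      exact ⟨c', hc', fun _ => hne⟩
    · exact ⟨0, fun _ _ => by simp, fun h' => absurd h' h⟩
  choose! c hc hcα using this
  refine ⟨∑ α ∈ P, c α, fun β hβ => ?_, fun α hα h0 => ?_⟩
  · rw [inner_sum]
    exact Finset.sum_nonneg fun α hα => hc α hα β hβ
  · by_contra! h
    rw [inner_sum, Finset.sum_eq_zero_iff_of_nonneg fun β hβ => hc β hβ α hα] at h0
    exact hcα α hα h (h0 α hα)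

lemma eventually_mul_add_ne_zero_and_pos {a b : ℝ} (hb : b ≠ 0) :
    ∀ᶠ s in Filter.atTop, s * a + b ≠ 0 ∧ (0 < a → 0 < s * a + b) := by
  filter_upwards [Filter.eventually_gt_atTop (|b| / |a|)] with s hs
  rcases eq_or_ne a 0 with rfl | ha
  · simpa using hb
  have hs0 : 0 < s := lt_of_le_of_lt (by positivity) hs
  have hsa : |b| < |s * a| := by
    rwa [div_lt_iff₀ (abs_pos.2 ha), ← abs_of_pos hs0, ← abs_mul] at hs
  refine ⟨fun h => ?_, fun ha' => ?_⟩
  · rw [add_eq_zero_iff_eq_neg.1 h, abs_neg] at hsa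
    exact hsa.false
  · rw [abs_of_pos (mul_pos hs0 ha')] at hsa
    linarith [neg_abs_le b]

lemma exists_isRegular_forall_inner_pos (hR0 : ∀ α ∈ R, α ≠ 0) (u₀ : E) :
    ∃ u, IsRegular R u ∧ ∀ α ∈ R, 0 < ⟪α, u₀⟫ → 0 < ⟪α, u⟫ := by
  obtain ⟨v, hv⟩ := Module.Dual.exists_forall_ne_zero_of_forall_exists
    (fun α : R => innerₗ E (α : E)) fun α => ⟨α, by simpa using hR0 α α.2⟩
  have : ∀ α ∈ R, ∀ᶠ s : ℝ in Filter.atTop,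
      ⟪α, s • u₀ + v⟫ ≠ 0 ∧ (0 < ⟪α, u₀⟫ → 0 < ⟪α, s • u₀ + v⟫) := fun α hα => by
    simpa only [inner_add_right, real_inner_smul_right, mul_comm]
      using eventually_mul_add_ne_zero_and_pos (a := ⟪α, u₀⟫) (b := ⟪α, v⟫) (hv ⟨α, hα⟩)
  obtain ⟨s, hs⟩ := ((Filter.eventually_all_finset R).2 this).exists
  exact ⟨s • u₀ + v, fun α hα => (hs α hα).1, fun α hα => (hs α hα).2⟩

variable {Rplus : Finset E} {u₀ : E}

lemma chamber_subset_chamber_posRoots (hpos : (R : Set E) = (Rplus : Set E) ∪ -(Rplus : Set E))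
    (hu₀ : u₀ ∈ chamber Rplus) (hface : ∀ α ∈ Rplus, ⟪α, u₀⟫ = 0 → ∀ c ∈ chamber Rplus, ⟪α, c⟫ = 0)
    (hu : ∀ α ∈ R, 0 < ⟪α, u₀⟫ → 0 < ⟪α, u⟫) : chamber Rplus ⊆ chamber (posRoots R u) := by
  intro c hc β hβ
  obtain ⟨hβR, hβu⟩ := mem_posRoots.1 hβ
  rcases (show β ∈ (Rplus : Set E) ∪ -Rplus from hpos ▸ hβR) with h | h
  · exact hc β h
  have hnR : -β ∈ R := by
    rw [← Finset.mem_coe, hpos]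
    exact Or.inl h
  rcases (hu₀ _ h).eq_or_lt with h0 | h0
  · linarith [inner_neg_left (𝕜 := ℝ) β c ▸ hface _ h h0.symm c hc]
  · linarith [inner_neg_left (𝕜 := ℝ) β u ▸ hu _ hnR h0]

/-- `c'` is the sum of `c` over the reflection group `W₀` of the roots orthogonal to `u₀`. Being
`W₀`-fixed it is orthogonal to those roots; it stays nonnegative on the other roots of `Rplus`
because `W₀` fixes `u₀` and so permutes the roots positive on `u₀`, all of which are positive on
`u`. -/
lemma exists_mem_chamber_inner_eq_mul (hR : IsReflectionStable R)
    (hpos : (R : Set E) = (Rplus : Set E) ∪ -(Rplus : Set E)) (hu₀ : u₀ ∈ chamber Rplus)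
    (hface : ∀ α ∈ Rplus, ⟪α, u₀⟫ = 0 → ∀ c ∈ chamber Rplus, ⟪α, c⟫ = 0)
    (hu : ∀ α ∈ R, 0 < ⟪α, u₀⟫ → 0 < ⟪α, u⟫) [Finite (weylGroup R)] {c : E}
    (hc : c ∈ chamber (posRoots R u)) :
    ∃ c' ∈ chamber Rplus, ∃ n : ℝ, 0 < n ∧ ∀ d ∈ chamber Rplus, ⟪d, c'⟫ = n * ⟪d, c⟫ := by
  set R₀ := R.filter (⟪·, u₀⟫ = 0)
  have hle : weylGroup R₀ ≤ weylGroup R := weylGroup_mono (Finset.filter_subset _ _)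
  have : Finite (weylGroup R₀) := Finite.of_injective _ (Subgroup.inclusion_injective hle)
  let _ := Fintype.ofFinite (weylGroup R₀)
  have hR₀ : ∀ d ∈ chamber Rplus, ∀ γ ∈ R₀, ⟪d, γ⟫ = 0 := by
    intro d hd γ hγ
    obtain ⟨hγR, hγ0⟩ := Finset.mem_filter.1 hγ
    rw [real_inner_comm]
    rcases (show γ ∈ (Rplus : Set E) ∪ -Rplus from hpos ▸ hγR) with h | h
    · exact hface γ h hγ0 d hd
    · have := hface _ h (by rw [inner_neg_left, hγ0, neg_zero]) d hd
      rwa [inner_neg_left, neg_eq_zero] at this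
  refine ⟨∑ w : weylGroup R₀, (w : E ≃ₗ[ℝ] E) c, fun α hα => ?_,
    Fintype.card (weylGroup R₀), by positivity, fun d hd => ?_⟩
  · have hαR : α ∈ R := by
      rw [← Finset.mem_coe, hpos]
      exact Or.inl hα
    rcases (hu₀ α hα).eq_or_lt with h0 | h0
    · rcases eq_or_ne α 0 with rfl | hα0
      · simp
      have hfix : rootReflection α (∑ w : weylGroup R₀, (w : E ≃ₗ[ℝ] E) c) =
          ∑ w : weylGroup R₀, (w : E ≃ₗ[ℝ] E) c := by
        rw [map_sum]
        exact Fintype.sum_equiv (Equiv.mulLeft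
          ⟨_, rootReflection_mem_weylGroup (Finset.mem_filter.2 ⟨hαR, h0.symm⟩)⟩) _ _ fun _ => rfl
      rw [real_inner_comm, (rootReflection_eq_self_iff hα0 _).1 hfix]
    · rw [inner_sum]
      refine Finset.sum_nonneg fun w _ => ?_
      have hw := inv_mem w.2
      have hwu₀ : (w⁻¹ : E ≃ₗ[ℝ] E) u₀ = u₀ :=
        map_eq_self_of_mem_weylGroup hw fun γ hγ => by
          rw [real_inner_comm]; exact (Finset.mem_filter.1 hγ).2
      have hwαR := map_mem_of_mem_weylGroup hR (hle hw) hαR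
      have hwα : (w⁻¹ : E ≃ₗ[ℝ] E) α ∈ posRoots R u :=
        mem_posRoots.2 ⟨hwαR, hu _ hwαR (by rwa [← hwu₀, inner_map_map_of_mem_weylGroup hw])⟩
      have := hc _ hwα
      rwa [← inner_map_map_of_mem_weylGroup w.2, show (w : E ≃ₗ[ℝ] E) ((w⁻¹ : E ≃ₗ[ℝ] E) α) = α
        from (w : E ≃ₗ[ℝ] E).apply_symm_apply α] at this
  · rw [inner_sum, Finset.sum_congr rfl fun (w : weylGroup R₀) _ => ?_, Finset.sum_const,
      Finset.card_univ, nsmul_eq_mul]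
    conv_lhs => rw [← map_eq_self_of_mem_weylGroup w.2 (hR₀ d hd)]
    exact inner_map_map_of_mem_weylGroup w.2 d c

end ReflectionGroup

open ReflectionGroup in
theorem mem_closedConvexHull_orbit_iff_sub_mem_dualCone_general
    {E : Type*} [NormedAddCommGroup E] [InnerProductSpace ℝ E] [FiniteDimensional ℝ E]
    (R : Finset E)
    (hR0 : ∀ α ∈ R, α ≠ 0)
    (hspan : Submodule.span ℝ (R : Set E) = ⊤)
    (hRinv : ∀ α ∈ R, ∀ β ∈ R, β - (2 * ⟪β, α⟫ / ⟪α, α⟫) • α ∈ R)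
    (Rplus : Finset E)
    (hpos : (R : Set E) = (Rplus : Set E) ∪ (-(Rplus : Set E)))
    (x y : E)
    (hx : x ∈ {v : E | ∀ α ∈ Rplus, 0 ≤ ⟪α, v⟫})
    (hy : y ∈ {v : E | ∀ α ∈ Rplus, 0 ≤ ⟪α, v⟫}) :
    y ∈ closure (convexHull ℝ (weylOrbit R x)) ↔
      x - y ∈ {u : E | ∀ v ∈ {v : E | ∀ α ∈ Rplus, 0 ≤ ⟪α, v⟫}, 0 ≤ ⟪u, v⟫} := by
  have := finite_weylGroup hspan hRinv
  obtain ⟨u₀, hu₀, hface⟩ := exists_mem_chamber_forall_inner_eq_zero Rplus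
  obtain ⟨u, hu, hu₀u⟩ := exists_isRegular_forall_inner_pos hR0 u₀
  have hsub := chamber_subset_chamber_posRoots hpos hu₀ hface hu₀u
  rw [mem_closure_convexHull_weylOrbit_iff hRinv hu (hsub hx) (hsub hy)]
  refine ⟨fun h c hc => h c (hsub hc), fun h c hc => ?_⟩
  obtain ⟨c', hc', n, hn, hc'c⟩ := exists_mem_chamber_inner_eq_mul hRinv hpos hu₀ hface hu₀u hc
  have := h c' hc'
  rw [inner_sub_left, hc'c x hx, hc'c y hy, ← mul_sub, ← inner_sub_left] at this
  exact (mul_nonneg_iff_of_pos_left hn).1 this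

/-- Kostant's convexity characterization: for `x, y` in the closed Weyl chamber `C` of a
finite reflection group, `y` belongs to the closed convex hull of the orbit of `x`
if and only if `x − y` lies in the dual cone `C*` of `C`. -/
theorem mem_closedConvexHull_orbit_iff_sub_mem_dualCone
    {E : Type*} [NormedAddCommGroup E] [InnerProductSpace ℝ E] [FiniteDimensional ℝ E]
    (R : Finset E)
    (hR0 : ∀ α ∈ R, α ≠ 0)
    (hspan : Submodule.span ℝ (R : Set E) = ⊤)
    (hreduced : ∀ α ∈ R, ∀ r : ℝ, r • α ∈ (R : Set E) → r = 1 ∨ r = -1)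
    (hRinv : ∀ α ∈ R, ∀ β ∈ R, β - (2 * ⟪β, α⟫ / ⟪α, α⟫) • α ∈ R)
    (Rplus : Finset E)
    (hpos : (R : Set E) = (Rplus : Set E) ∪ (-(Rplus : Set E)))
    (hdisj : Disjoint (Rplus : Set E) (-(Rplus : Set E)))
    (x y : E)
    (hx : x ∈ {v : E | ∀ α ∈ Rplus, 0 ≤ ⟪α, v⟫})
    (hy : y ∈ {v : E | ∀ α ∈ Rplus, 0 ≤ ⟪α, v⟫}) :
    y ∈ closure (convexHull ℝ (weylOrbit R x)) ↔
      x - y ∈ {u : E | ∀ v ∈ {v : E | ∀ α ∈ Rplus, 0 ≤ ⟪α, v⟫}, 0 ≤ ⟪u, v⟫} :=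
  mem_closedConvexHull_orbit_iff_sub_mem_dualCone_general R hR0 hspan hRinv Rplus hpos x y hx hy
end
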